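/- Let E = (E, U, τ, d) be a Brauer G-set and w a walk of E. Then there exist a unique special walk v of E with s(v) = s(w) and a unique integer n such that w ≈ (t(w)|g^{n·d(t(w))}|t(v)) v, i.e. w is homotopic to the composition of v followed by the walk from t(v) to t(w) = g^{n·d(t(w))}·t(v) using n·d(t(w)) steps of g. -/

import Mathlib

namespace FB

/-- The data of a Brauer `G`-set for `G = ⟨g⟩` infinite cyclic:
a `ℤ`-set `E` (where `act n` is the action of `g^n`), a subset `U`,
an involution `tau` on `U` (encoded as a total map, junk outside `U`),
and a degree function `d`. -/
structure BrauerData where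
  E : Type
  act : ℤ → E → E
  U : Set E
  tau : E → E
  d : E → ℕ

namespace BrauerData

/-- The Nakayama automorphism `σ(e) = g^(d e) · e`. -/
def sigma (B : BrauerData) (e : B.E) : B.E := B.act (B.d e) e

/-- The axioms making the data a Brauer `G`-set. -/
structure IsBrauer (B : BrauerData) : Prop where
  act_zero : ∀ e, B.act 0 e = e
  act_add : ∀ (m n : ℤ) (e : B.E), B.act (m + n) e = B.act m (B.act n e)
  dpos : ∀ e, 0 < B.d e
  d_act : ∀ (n : ℤ) (e : B.E), B.d (B.act n e) = B.d e
  tau_mem : ∀ e ∈ B.U, B.tau e ∈ B.U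
  tau_invol : ∀ e ∈ B.U, B.tau (B.tau e) = e
  sigma_mem : ∀ e, e ∈ B.U ↔ B.sigma e ∈ B.U
  tau_sigma : ∀ e ∈ B.U, B.tau (B.sigma e) = B.sigma (B.tau e)

end BrauerData

/-- The letters of walks: `g`, `g⁻¹`, `τ`. -/
inductive Step : Type
  | g : Step
  | ginv : Step
  | tau : Step
  deriving DecidableEq

namespace BrauerData

/-- Apply one step. -/
def stepFun (B : BrauerData) : Step → B.E → B.E
  | Step.g, e => B.act 1 e
  | Step.ginv, e => B.act (-1) e
  | Step.tau, e => B.tau e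

/-- Terminal of the walk starting at `e` with steps `l` (listed in order of application). -/
def endpt (B : BrauerData) : B.E → List Step → B.E
  | e, [] => e
  | e, s :: l => B.endpt (B.stepFun s e) l

/-- The condition for a list of steps from `e` to be a walk:
both endpoints of a `τ`-step must lie in `U`. -/
def IsValid (B : BrauerData) : B.E → List Step → Prop
  | _, [] => True
  | e, s :: l => (s = Step.tau → e ∈ B.U ∧ B.tau e ∈ B.U) ∧ B.IsValid (B.stepFun s e) l

/-- A Brauer `G`-set is connected if any two half-edges are joined by a walk. -/
def Connected (B : BrauerData) : Prop :=
  ∀ x y : B.E, ∃ l : List Step, B.IsValid x l ∧ B.endpt x l = y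

/-- A closed walk at `e`. -/
def Closed (B : BrauerData) (e : B.E) (l : List Step) : Prop :=
  B.IsValid e l ∧ B.endpt e l = e

theorem endpt_append (B : BrauerData) (e : B.E) (l₁ l₂ : List Step) :
    B.endpt e (l₁ ++ l₂) = B.endpt (B.endpt e l₁) l₂ := by
  induction l₁ generalizing e with
  | nil => rfl
  | cons s l ih => simpa [endpt] using ih (B.stepFun s e)

theorem isValid_append (B : BrauerData) (e : B.E) (l₁ l₂ : List Step) :
    B.IsValid e (l₁ ++ l₂) ↔ B.IsValid e l₁ ∧ B.IsValid (B.endpt e l₁) l₂ := by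
  induction l₁ generalizing e with
  | nil => simp [IsValid, endpt]
  | cons s l ih =>
    simp only [List.cons_append, IsValid, endpt, List.append_eq, ih]
    tauto

end BrauerData

/-- The walk `g^n` (as a list of steps). -/
def gSteps (n : ℤ) : List Step :=
  if 0 ≤ n then List.replicate n.toNat Step.g else List.replicate (-n).toNat Step.ginv

/-- The homotopy relation `≈` on walks of a Brauer `G`-set, relative to a common
source `e`.  It is the equivalence relation generated by (mh1), (mh2), (mh3). -/
inductive Htp (B : BrauerData) : B.E → List Step → List Step → Prop
  | refl (e : B.E) (l : List Step) (h : B.IsValid e l) : Htp B e l l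
  | symm {e : B.E} {l₁ l₂ : List Step} : Htp B e l₁ l₂ → Htp B e l₂ l₁
  | trans {e : B.E} {l₁ l₂ l₃ : List Step} :
      Htp B e l₁ l₂ → Htp B e l₂ l₃ → Htp B e l₁ l₃
  | gginv (e : B.E) : Htp B e [Step.g, Step.ginv] []
  | ginvg (e : B.E) : Htp B e [Step.ginv, Step.g] []
  | tautau (e : B.E) (h : e ∈ B.U) : Htp B e [Step.tau, Step.tau] []
  | square (e : B.E) (h : e ∈ B.U) :
      Htp B e (List.replicate (B.d e) Step.g ++ [Step.tau])
              (Step.tau :: List.replicate (B.d (B.tau e)) Step.g)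
  | post {e : B.E} {l₁ l₂ : List Step} (u : List Step) (h : Htp B e l₁ l₂)
      (hu : B.IsValid (B.endpt e l₁) u) : Htp B e (l₁ ++ u) (l₂ ++ u)
  | pre {l₁ l₂ : List Step} (e : B.E) (v : List Step) (hv : B.IsValid e v)
      (h : Htp B (B.endpt e v) l₁ l₂) : Htp B e (v ++ l₁) (v ++ l₂)

/-- Morphisms of Brauer `G`-sets. -/
def IsMorphism (B B' : BrauerData) (f : B.E → B'.E) : Prop :=
  (∀ (n : ℤ) (e : B.E), f (B.act n e) = B'.act n (f e)) ∧
  (∀ e ∈ B.U, f e ∈ B'.U) ∧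
  (∀ e ∈ B.U, f (B.tau e) = B'.tau (f e)) ∧
  (∀ e, B'.d (f e) = B.d e)

/-- Coverings of Brauer `G`-sets. -/
def IsCovering (B B' : BrauerData) (f : B.E → B'.E) : Prop :=
  (∀ (n : ℤ) (e : B.E), f (B.act n e) = B'.act n (f e)) ∧
  (∀ e, e ∈ B.U ↔ f e ∈ B'.U) ∧
  (∀ e ∈ B.U, f (B.tau e) = B'.tau (f e)) ∧
  (∀ e, B'.d (f e) = B.d e)

/-- Isomorphisms of Brauer `G`-sets: invertible morphisms whose inverse is a morphism. -/
def IsIsoBrauer (B B' : BrauerData) : Prop :=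
  ∃ (f : B.E → B'.E) (h : B'.E → B.E), IsMorphism B B' f ∧ IsMorphism B' B h ∧
    (∀ x, h (f x) = x) ∧ (∀ y, f (h y) = y)

/-- Closed walks at a basepoint. -/
def ClosedWalk (B : BrauerData) (e : B.E) : Type := {l : List Step // B.Closed e l}

/-- Composition (concatenation) of closed walks. -/
def ClosedWalk.comp {B : BrauerData} {e : B.E} (w v : ClosedWalk B e) :
    ClosedWalk B e :=
  ⟨w.1 ++ v.1, by
    obtain ⟨hw1, hw2⟩ := w.2
    obtain ⟨hv1, hv2⟩ := v.2
    refine ⟨?_, ?_⟩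
    · rw [B.isValid_append]
      exact ⟨hw1, by rw [hw2]; exact hv1⟩
    · rw [B.endpt_append, hw2, hv2]⟩

/-- The fundamental group `Π_m(E, e)` of a Brauer `G`-set: homotopy classes of
closed walks at `e` (as a set; the group structure is given by `ClosedWalk.comp`). -/
def Pi1 (B : BrauerData) (e : B.E) : Type :=
  Quot (fun w v : ClosedWalk B e => Htp B e w.1 v.1)

/-- Walks from `x` to `y`. -/
def Walks (B : BrauerData) (x y : B.E) : Type :=
  {l : List Step // B.IsValid x l ∧ B.endpt x l = y}

/-- Composition (concatenation) of walks. -/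
def Walks.comp {B : BrauerData} {x y z : B.E} (u : Walks B x y) (v : Walks B y z) :
    Walks B x z :=
  ⟨u.1 ++ v.1, by
    obtain ⟨hu1, hu2⟩ := u.2
    obtain ⟨hv1, hv2⟩ := v.2
    refine ⟨?_, ?_⟩
    · rw [B.isValid_append]
      exact ⟨hu1, by rw [hu2]; exact hv1⟩
    · rw [B.endpt_append, hu2, hv2]⟩

/-- Hom-sets of the fundamental groupoid `Π_m(E, A)`: homotopy classes of walks
from `x` to `y`. -/
def WalkCls (B : BrauerData) (x y : B.E) : Type :=
  Quot (fun u v : Walks B x y => Htp B x u.1 v.1)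

/-- Composition in the fundamental groupoid. -/
def WalkCls.comp {B : BrauerData} {x y z : B.E} :
    WalkCls B x y → WalkCls B y z → WalkCls B x z := by
  refine Quot.lift (fun u => Quot.lift
      (fun v : Walks B y z => Quot.mk _ (u.comp v)) ?_) ?_
  · intro v₁ v₂ hv
    apply Quot.sound
    show Htp B x (u.1 ++ v₁.1) (u.1 ++ v₂.1)
    refine Htp.pre x u.1 u.2.1 ?_
    rw [u.2.2]
    exact hv
  · intro u₁ u₂ hu
    funext v
    induction v using Quot.ind with
    | _ v =>
      show Quot.mk _ (u₁.comp v) = Quot.mk _ (u₂.comp v)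
      apply Quot.sound
      show Htp B x (u₁.1 ++ v.1) (u₂.1 ++ v.1)
      refine Htp.post v.1 hu ?_
      rw [u₁.2.2]
      exact v.2.1

/-- `r` is the order of the Nakayama automorphism. -/
def IsOrderOf (B : BrauerData) (r : ℕ) : Prop :=
  0 < r ∧ (∀ x, B.sigma^[r] x = x) ∧
    ∀ j : ℕ, 0 < j → (∀ x, B.sigma^[j] x = x) → r ≤ j

/-- The reduced homotopy relation `≈'` (relative to the order `r` of the Nakayama
automorphism): `w ≈' v` iff `w ≈ (t w | g^(k·r·d(t w)) | t v) v` for some `k : ℤ`. -/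
def RedHtp (B : BrauerData) (r : ℕ) (e : B.E) (l₁ l₂ : List Step) : Prop :=
  ∃ k : ℤ, Htp B e l₁ (l₂ ++ gSteps (k * (r : ℤ) * (B.d (B.endpt e l₁) : ℤ)))

/-- One step of the `⟨σ⟩`-orbit relation. -/
def sigmaRel (B : BrauerData) (x y : B.E) : Prop := B.sigma x = y

/-- One step of the `G`-orbit (vertex) relation. -/
def vertexRel (B : BrauerData) (x y : B.E) : Prop := B.act 1 x = y

/-- Vertices of a Brauer `G`-set: the `G`-orbits. -/
def VertexQuot (B : BrauerData) : Type := Quot (vertexRel B)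

/-- Edges of a Brauer `G`-set: pairs `{e, τ e}` with `e ∈ U`, `τ e ≠ e`. -/
def EdgeQuot (B : BrauerData) : Type :=
  Quot (fun a b : {e : B.E // e ∈ B.U ∧ B.tau e ≠ e} => B.tau a.1 = b.1)

/-- Every vertex is finite and has integral f-degree. -/
def IntegralFDegree (B : BrauerData) : Prop :=
  ∀ e : B.E, ∃ m : ℕ, 0 < m ∧ B.act m e = e ∧
    (∀ j : ℕ, 0 < j → B.act j e = e → m ≤ j) ∧ m ∣ B.d e

/-- The group `⟨σ⟩` is admissible: no `⟨σ⟩`-orbit contains both half-edges of an edge. -/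
def SigmaAdmissible (B : BrauerData) : Prop :=
  ∀ e : B.E, ¬ Relation.EqvGen (sigmaRel B) e (B.tau e)

/-- The quotient `E/⟨σ⟩` of an `f_ms`-BG by the group generated by its
Nakayama automorphism. -/
def sigmaQuot (B : BrauerData) (hB : B.IsBrauer) (hU : B.U = Set.univ) : BrauerData where
  E := Quot (sigmaRel B)
  act := fun n => Quot.lift (fun x => Quot.mk (sigmaRel B) (B.act n x))
    (fun x y hxy => by
      apply Quot.sound
      unfold sigmaRel at *
      subst hxy
      show B.sigma (B.act n x) = B.act n (B.sigma x)
      unfold BrauerData.sigma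
      rw [hB.d_act, ← hB.act_add, ← hB.act_add, add_comm])
  U := Quot.mk (sigmaRel B) '' B.U
  tau := Quot.lift (fun x => Quot.mk (sigmaRel B) (B.tau x))
    (fun x y hxy => by
      apply Quot.sound
      unfold sigmaRel at *
      subst hxy
      show B.sigma (B.tau x) = B.tau (B.sigma x)
      exact (hB.tau_sigma x (by rw [hU]; trivial)).symm)
  d := Quot.lift B.d
    (fun x y hxy => by
      unfold sigmaRel at hxy
      subst hxy
      show B.d x = B.d (B.sigma x)
      unfold BrauerData.sigma
      rw [hB.d_act])

open Classical in
/-- The quotient `E/Π` of a Brauer `G`-set by a group `Π` of automorphisms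
(given by a group `Γ` acting by automorphisms via `ρ`). -/
noncomputable def quotData (B : BrauerData) (Γ : Type) [Group Γ]
    (ρ : Γ →* Equiv.Perm B.E) (hρ : ∀ γ : Γ, IsMorphism B B (ρ γ)) : BrauerData where
  E := Quot (fun x y : B.E => ∃ γ : Γ, ρ γ x = y)
  act := fun n => Quot.lift (fun x => Quot.mk _ (B.act n x))
    (fun x y hxy => by
      obtain ⟨γ, hγ⟩ := hxy
      exact Quot.sound ⟨γ, by rw [(hρ γ).1 n x, hγ]⟩)
  U := Quot.mk _ '' B.U
  tau := Quot.lift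
    (fun x => if x ∈ B.U then Quot.mk _ (B.tau x) else Quot.mk _ x)
    (fun x y hxy => by
      obtain ⟨γ, hγ⟩ := hxy
      try dsimp only
      by_cases hx : x ∈ B.U
      · have hy : y ∈ B.U := hγ ▸ (hρ γ).2.1 x hx
        rw [if_pos hx, if_pos hy]
        exact Quot.sound ⟨γ, by rw [(hρ γ).2.2.1 x hx, hγ]⟩
      · have hy : y ∉ B.U := by
          intro hy
          apply hx
          have h1 : ρ γ⁻¹ y ∈ B.U := (hρ γ⁻¹).2.1 y hy
          have h2 : ρ γ⁻¹ y = x := by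
            rw [← hγ, ← Equiv.Perm.mul_apply, ← map_mul, inv_mul_cancel, map_one,
              Equiv.Perm.one_apply]
          rwa [h2] at h1
        rw [if_neg hx, if_neg hy]
        exact Quot.sound ⟨γ, hγ⟩)
  d := Quot.lift B.d
    (fun x y hxy => by
      obtain ⟨γ, hγ⟩ := hxy
      rw [← hγ, (hρ γ).2.2.2 x])

open Classical in
/-- The double cover `Ê` of a Brauer `G`-set: two copies of `E`, with the
involution exchanging the copies at the fixed points of `τ`. -/
noncomputable def hatData (B : BrauerData) : BrauerData where
  E := B.E × Bool
  act := fun n p => (B.act n p.1, p.2)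
  U := {p | p.1 ∈ B.U}
  tau := fun p => if B.tau p.1 = p.1 then (p.1, !p.2) else (B.tau p.1, p.2)
  d := fun p => B.d p.1

section Restrict

variable (B : BrauerData) (hB : B.IsBrauer) (C : Set B.E)
  (hC : ∀ e : B.E, e ∈ C ↔ B.act (B.d e) e ∈ C)

open Classical in
/-- The first-return map forwards, on `E ∖ C`. -/
noncomputable def restrictFwd (x : {x : B.E // x ∉ C}) : {x : B.E // x ∉ C} :=
  have hex : ∃ N : ℕ, 0 < N ∧ B.act N x.1 ∉ C :=
    ⟨B.d x.1, hB.dpos x.1, fun hc => x.2 ((hC x.1).mpr hc)⟩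
  ⟨B.act (Nat.find hex) x.1, (Nat.find_spec hex).2⟩

open Classical in
/-- The first-return map backwards, on `E ∖ C`. -/
noncomputable def restrictBwd (x : {x : B.E // x ∉ C}) : {x : B.E // x ∉ C} :=
  have hex : ∃ N : ℕ, 0 < N ∧ B.act (-(N : ℤ)) x.1 ∉ C := by
    refine ⟨B.d x.1, hB.dpos x.1, fun hc => x.2 ?_⟩
    have h1 : B.act (B.d (B.act (-(B.d x.1 : ℤ)) x.1)) (B.act (-(B.d x.1 : ℤ)) x.1) ∈ C :=
      (hC _).mp hc
    rw [hB.d_act, ← hB.act_add] at h1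
    simpa [hB.act_zero] using h1
  ⟨B.act (-(Nat.find hex : ℤ)) x.1, (Nat.find_spec hex).2⟩

open Classical in
/-- The Brauer `G`-set structure on `E' = E ∖ C` (for `C ⊆ E ∖ U` stable under `σ`):
`g` acts by the first-return map, and the degree is corrected by the number of
deleted points passed. -/
noncomputable def restrictData (hCU : ∀ e ∈ C, e ∉ B.U) : BrauerData where
  E := {x : B.E // x ∉ C}
  act := fun n x =>
    if 0 ≤ n then (restrictFwd B hB C hC)^[n.toNat] x
    else (restrictBwd B hB C hC)^[(-n).toNat] x
  U := {x | x.1 ∈ B.U}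
  tau := fun x =>
    if h : x.1 ∈ B.U then ⟨B.tau x.1, fun hc => hCU _ hc (hB.tau_mem _ h)⟩ else x
  d := fun x => B.d x.1 - ((Finset.Ico 1 (B.d x.1)).filter fun i => B.act i x.1 ∈ C).card

end Restrict

section Lines

/-- The data of a doubly infinite walk. -/
structure Line (B : BrauerData) where
  pt : ℤ → B.E
  st : ℤ → Step

/-- The line condition: `pt i = (st i) (pt (i-1))`, and both endpoints of a
`τ`-step lie in `U`. -/
def Line.IsLine {B : BrauerData} (l : Line B) : Prop :=
  ∀ i : ℤ, (l.st i = Step.tau → l.pt (i - 1) ∈ B.U ∧ l.pt i ∈ B.U) ∧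
    l.pt i = B.stepFun (l.st i) (l.pt (i - 1))

/-- The `n`-th translate of a line. -/
def Line.translate {B : BrauerData} (l : Line B) (n : ℤ) : Line B :=
  ⟨fun i => l.pt (i + n), fun i => l.st (i + n)⟩

/-- The inverse of a step. -/
def Step.inv : Step → Step
  | Step.g => Step.ginv
  | Step.ginv => Step.g
  | Step.tau => Step.tau

/-- The inverse of a line. -/
def Line.inv {B : BrauerData} (l : Line B) : Line B :=
  ⟨fun i => l.pt (-i), fun i => (l.st (1 - i)).inv⟩

/-- A band: a periodic line of the alternating form
`⋯ τ g^{k_i} τ g^{-l_i} τ g^{k_{i+1}} ⋯` with `0 < k_i < d(e_i)`, `0 < l_i < d(h_i)`. -/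
def Line.IsBand {B : BrauerData} (l : Line B) : Prop :=
  l.IsLine ∧
  (∃ n : ℤ, 0 < n ∧ l.translate n = l) ∧
  (∃ i : ℤ, l.st i = Step.tau) ∧
  (∀ i : ℤ, l.st i = Step.tau → l.st (i + 1) ≠ Step.tau) ∧
  (∀ i : ℤ, l.st i = Step.g → l.st (i + 1) = Step.g ∨ l.st (i + 1) = Step.tau) ∧
  (∀ i : ℤ, l.st i = Step.ginv → l.st (i + 1) = Step.ginv ∨ l.st (i + 1) = Step.tau) ∧
  (∀ i : ℤ, l.st i = Step.g → l.st (i + 1) = Step.tau → l.st (i + 2) = Step.ginv) ∧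
  (∀ i : ℤ, l.st i = Step.ginv → l.st (i + 1) = Step.tau → l.st (i + 2) = Step.g) ∧
  (∀ (i : ℤ) (j : ℕ), l.st i = Step.tau → 0 < j →
    (∀ m : ℕ, 0 < m → m ≤ j → l.st (i + m) ≠ Step.tau) → j < B.d (l.pt i))

/-- One step of the equivalence relation on bands: translation or inversion. -/
def BandRel (B : BrauerData) (l₁ l₂ : Line B) : Prop :=
  (∃ n : ℤ, l₂ = l₁.translate n) ∨ l₂ = l₁.inv

/-- The set of equivalence classes of bands. -/
def BandClasses (B : BrauerData) : Type :=
  Quot (fun l₁ l₂ : {l : Line B // l.IsBand} => BandRel B l₁.1 l₂.1)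

end Lines

section Special

/-- Tail of a special walk: blocks `g^i` separated by single `τ`'s, with
`0 < i < d` for the inner blocks and `0 ≤ i < d` for the last block. -/
inductive SpecialTail (B : BrauerData) : B.E → List Step → Prop
  | last (e : B.E) (i : ℕ) (h : i < B.d e) :
      SpecialTail B e (List.replicate i Step.g)
  | cons (e : B.E) (i : ℕ) (h0 : 0 < i) (h : i < B.d e)
      (hU : B.act i e ∈ B.U) (hU' : B.tau (B.act i e) ∈ B.U) {l : List Step}
      (ht : SpecialTail B (B.tau (B.act i e)) l) :
      SpecialTail B e (List.replicate i Step.g ++ Step.tau :: l)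

/-- Special walks: `g^{i_k} τ g^{i_{k-1}} τ ⋯ τ g^{i_1} τ g^{i_0}` with
`0 ≤ i_0 < d(e_0)`, `0 ≤ i_k < d(e_k)` and `0 < i_l < d(e_l)` for `1 ≤ l ≤ k-1`. -/
inductive IsSpecial (B : BrauerData) : B.E → List Step → Prop
  | single (e : B.E) (i : ℕ) (h : i < B.d e) :
      IsSpecial B e (List.replicate i Step.g)
  | multi (e : B.E) (i : ℕ) (h : i < B.d e)
      (hU : B.act i e ∈ B.U) (hU' : B.tau (B.act i e) ∈ B.U) {l : List Step}
      (ht : SpecialTail B (B.tau (B.act i e)) l) :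
      IsSpecial B e (List.replicate i Step.g ++ Step.tau :: l)

end Special

end FB

namespace FB

section Aux

variable {B : BrauerData}

/-! ### σ^n as a ℤ-power and its basic properties -/

theorem act_inj (hB : B.IsBrauer) (m : ℤ) {x y : B.E} (h : B.act m x = B.act m y) :
    x = y := by
  have := congrArg (B.act (-m)) h
  rwa [← hB.act_add, ← hB.act_add, neg_add_cancel, hB.act_zero, hB.act_zero] at this

theorem act_dmul_mem (hB : B.IsBrauer) (n : ℤ) (x : B.E) :
    x ∈ B.U ↔ B.act (n * B.d x) x ∈ B.U := by
  induction n using Int.induction_on with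
  | zero => rw [zero_mul, hB.act_zero]
  | succ k ih =>
    have hd : B.d (B.act (k * B.d x) x) = B.d x := hB.d_act _ _
    have := hB.sigma_mem (B.act (k * B.d x) x)
    rw [BrauerData.sigma, hd, ← hB.act_add] at this
    rw [ih, this]
    ring_nf
  | pred k ih =>
    have hd : B.d (B.act ((-k - 1) * B.d x) x) = B.d x := hB.d_act _ _
    have := hB.sigma_mem (B.act ((-k - 1) * B.d x) x)
    rw [BrauerData.sigma, hd, ← hB.act_add] at this
    have he : (B.d x : ℤ) + (-k - 1) * B.d x = -k * B.d x := by ring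
    rw [he] at this
    rw [← this] at ih
    rw [ih]

theorem tau_act_dmul (hB : B.IsBrauer) (n : ℤ) (x : B.E) (hx : x ∈ B.U) :
    B.tau (B.act (n * B.d x) x) = B.act (n * B.d (B.tau x)) (B.tau x) := by
  induction n using Int.induction_on with
  | zero => rw [zero_mul, zero_mul, hB.act_zero, hB.act_zero]
  | succ k ih =>
    have hk : B.act (k * B.d x) x ∈ B.U := (act_dmul_mem hB k x).mp hx
    have := hB.tau_sigma _ hk
    rw [BrauerData.sigma, BrauerData.sigma, hB.d_act, ih, hB.d_act, ← hB.act_add,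
      ← hB.act_add] at this
    rw [show ((k : ℤ) + 1) * B.d x = (B.d x : ℤ) + k * B.d x by ring,
      show ((k : ℤ) + 1) * B.d (B.tau x) = (B.d (B.tau x) : ℤ) + k * B.d (B.tau x) by ring]
    exact this
  | pred k ih =>
    -- from ih at -k, deduce at -k-1 using injectivity of σ
    have hy : B.act ((-k - 1) * B.d x) x ∈ B.U := (act_dmul_mem hB _ x).mp hx
    have key : B.act (B.d (B.tau (B.act ((-k - 1) * B.d x) x)))
          (B.tau (B.act ((-k - 1) * B.d x) x))
        = B.act (-k * B.d (B.tau x)) (B.tau x) := by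
      have := hB.tau_sigma _ hy
      rw [BrauerData.sigma, BrauerData.sigma, hB.d_act, ← hB.act_add] at this
      rw [show (B.d x : ℤ) + (-k - 1) * B.d x = -k * B.d x by ring] at this
      rw [← this, ih]
    -- now cancel act (d (tau x)) from both sides
    have hdy : B.d (B.tau (B.act ((-k - 1) * B.d x) x)) = B.d (B.tau x) := by
      have := congrArg B.d key
      rwa [hB.d_act, hB.d_act] at this
    rw [hdy] at key
    rw [show (-(k:ℤ) * B.d (B.tau x)) = (B.d (B.tau x) : ℤ) + (-k - 1) * B.d (B.tau x)
      by ring, hB.act_add] at key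
    exact act_inj hB (B.d (B.tau x)) key

/-! ### endpoints and validity of τ-free walks -/

theorem endpt_replicate_g (B : BrauerData) (hB : B.IsBrauer) (x : B.E) (m : ℕ) :
    B.endpt x (List.replicate m Step.g) = B.act m x := by
  induction m generalizing x with
  | zero => simp [BrauerData.endpt, hB.act_zero]
  | succ k ih =>
    rw [List.replicate_succ]
    show B.endpt (B.stepFun Step.g x) _ = _
    rw [ih, BrauerData.stepFun, ← hB.act_add]
    norm_num [add_comm]

theorem endpt_replicate_ginv (B : BrauerData) (hB : B.IsBrauer) (x : B.E) (m : ℕ) :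
    B.endpt x (List.replicate m Step.ginv) = B.act (-(m : ℤ)) x := by
  induction m generalizing x with
  | zero => simp [BrauerData.endpt, hB.act_zero]
  | succ k ih =>
    rw [List.replicate_succ]
    show B.endpt (B.stepFun Step.ginv x) _ = _
    rw [ih, BrauerData.stepFun, ← hB.act_add]
    congr 1
    push_cast
    ring

theorem endpt_gSteps (B : BrauerData) (hB : B.IsBrauer) (x : B.E) (m : ℤ) :
    B.endpt x (gSteps m) = B.act m x := by
  unfold gSteps
  split
  · rw [endpt_replicate_g B hB]
    congr 1
    omega
  · rw [endpt_replicate_ginv B hB]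
    congr 1
    omega

theorem noTau_isValid (B : BrauerData) {l : List Step} (h : Step.tau ∉ l) (x : B.E) :
    B.IsValid x l := by
  induction l generalizing x with
  | nil => trivial
  | cons s t ih =>
    refine ⟨fun hs => absurd (hs ▸ List.mem_cons_self (a := s) (l := t)) h, ih (fun ht => h (List.mem_cons_of_mem _ ht)) _⟩

theorem noTau_replicate_g (m : ℕ) : Step.tau ∉ List.replicate m Step.g := by
  intro h; have := List.eq_of_mem_replicate h; cases this

theorem noTau_replicate_ginv (m : ℕ) : Step.tau ∉ List.replicate m Step.ginv := by
  intro h; have := List.eq_of_mem_replicate h; cases this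

theorem noTau_gSteps (m : ℤ) : Step.tau ∉ gSteps m := by
  unfold gSteps; split
  · exact noTau_replicate_g _
  · exact noTau_replicate_ginv _

/-! ### weight of a τ-free walk -/

def wt : List Step → ℤ
  | [] => 0
  | Step.g :: l => 1 + wt l
  | Step.ginv :: l => -1 + wt l
  | Step.tau :: l => wt l

theorem wt_append (l₁ l₂ : List Step) : wt (l₁ ++ l₂) = wt l₁ + wt l₂ := by
  induction l₁ with
  | nil => simp [wt]
  | cons s t ih => cases s <;> simp [wt, ih] <;> ring

theorem wt_replicate_g (m : ℕ) : wt (List.replicate m Step.g) = m := by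
  induction m with
  | zero => rfl
  | succ k ih => rw [List.replicate_succ]; show 1 + _ = _; rw [ih]; push_cast; ring

theorem wt_replicate_ginv (m : ℕ) : wt (List.replicate m Step.ginv) = -m := by
  induction m with
  | zero => rfl
  | succ k ih => rw [List.replicate_succ]; show -1 + _ = _; rw [ih]; push_cast; ring

theorem wt_gSteps (m : ℤ) : wt (gSteps m) = m := by
  unfold gSteps; split
  · rw [wt_replicate_g]; omega
  · rw [wt_replicate_ginv]; omega

theorem wt_g_single : wt [Step.g] = 1 := by norm_num [wt]

theorem wt_ginv_single : wt [Step.ginv] = -1 := by norm_num [wt]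

theorem gSteps_natCast (k : ℕ) : gSteps (k : ℤ) = List.replicate k Step.g := by
  unfold gSteps
  rw [if_pos (by positivity), Int.toNat_natCast]

theorem gSteps_zero : gSteps 0 = [] := by norm_num [gSteps]

theorem gSteps_one_add_neg {m : ℤ} (hm : m < 0) :
    gSteps (1 + m) = List.replicate ((-m).toNat - 1) Step.ginv := by
  rcases eq_or_lt_of_le (by omega : m ≤ -1) with h | h
  · subst h; norm_num [gSteps]
  · unfold gSteps; rw [if_neg (by omega)]; congr 1; omega

theorem gSteps_neg_one_add {m : ℤ} (hm : 0 < m) :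
    gSteps (-1 + m) = List.replicate (m.toNat - 1) Step.g := by
  unfold gSteps; rw [if_pos (by omega)]; congr 1; omega

theorem htp_g_cons (B : BrauerData) (x : B.E) (m : ℤ) :
    Htp B x (Step.g :: gSteps m) (gSteps (1 + m)) := by
  rcases le_or_gt 0 m with h | h
  · have h1 : Step.g :: gSteps m = gSteps (1 + m) := by
      unfold gSteps
      rw [if_pos h, if_pos (by omega), show (1 + m).toNat = m.toNat + 1 by omega,
        List.replicate_succ]
    rw [h1]
    exact Htp.refl x _ (noTau_isValid B (noTau_gSteps _) x)
  · have h1 : Step.g :: gSteps m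
        = [Step.g, Step.ginv] ++ List.replicate ((-m).toNat - 1) Step.ginv := by
      unfold gSteps
      rw [if_neg (by omega), show (-m).toNat = ((-m).toNat - 1) + 1 by omega,
        List.replicate_succ]
      rfl
    rw [h1, gSteps_one_add_neg h]
    have := Htp.post (B := B) (e := x) (List.replicate ((-m).toNat - 1) Step.ginv)
      (Htp.gginv x) (noTau_isValid B (noTau_replicate_ginv _) _)
    simpa using this

theorem htp_ginv_cons (B : BrauerData) (x : B.E) (m : ℤ) :
    Htp B x (Step.ginv :: gSteps m) (gSteps (-1 + m)) := by
  rcases le_or_gt m 0 with h | h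
  · have h1 : Step.ginv :: gSteps m = gSteps (-1 + m) := by
      rcases eq_or_lt_of_le h with h' | h'
      · subst h'; norm_num [gSteps]
      · unfold gSteps
        rw [if_neg (by omega), if_neg (by omega),
          show (-(-1 + m)).toNat = (-m).toNat + 1 by omega, List.replicate_succ]
    rw [h1]
    exact Htp.refl x _ (noTau_isValid B (noTau_gSteps _) x)
  · have h1 : Step.ginv :: gSteps m
        = [Step.ginv, Step.g] ++ List.replicate (m.toNat - 1) Step.g := by
      unfold gSteps
      rw [if_pos (by omega), show m.toNat = (m.toNat - 1) + 1 by omega,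
        List.replicate_succ]
      rfl
    rw [h1, gSteps_neg_one_add h]
    have := Htp.post (B := B) (e := x) (List.replicate (m.toNat - 1) Step.g)
      (Htp.ginvg x) (noTau_isValid B (noTau_replicate_g _) _)
    simpa using this

theorem htp_noTau (B : BrauerData) {l : List Step} (h : Step.tau ∉ l) (x : B.E) :
    Htp B x l (gSteps (wt l)) := by
  induction l generalizing x with
  | nil => exact gSteps_zero ▸ Htp.refl x [] trivial
  | cons s t ih =>
    have hs : s ≠ Step.tau := fun hs => h (hs ▸ List.mem_cons_self (a := s) (l := t))
    have ht : Step.tau ∉ t := fun ht => h (List.mem_cons_of_mem _ ht)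
    have hv : B.IsValid x [s] := ⟨fun h' => absurd h' hs, trivial⟩
    have h1 : Htp B x ([s] ++ t) ([s] ++ gSteps (wt t)) := Htp.pre x [s] hv (ih ht _)
    cases s with
    | g => exact h1.trans (htp_g_cons B x (wt t))
    | ginv => exact h1.trans (htp_ginv_cons B x (wt t))
    | tau => exact absurd rfl hs

theorem htp_pure (B : BrauerData) {l₁ l₂ : List Step} (h₁ : Step.tau ∉ l₁)
    (h₂ : Step.tau ∉ l₂) (hw : wt l₁ = wt l₂) (x : B.E) : Htp B x l₁ l₂ :=
  (htp_noTau B h₁ x).trans (hw ▸ (htp_noTau B h₂ x).symm)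

theorem htp_valid_end (hB : B.IsBrauer) {x : B.E} {l₁ l₂ : List Step}
    (h : Htp B x l₁ l₂) :
    B.IsValid x l₁ ∧ B.IsValid x l₂ ∧ B.endpt x l₁ = B.endpt x l₂ := by
  induction h with
  | refl e l h => exact ⟨h, h, rfl⟩
  | symm h ih => exact ⟨ih.2.1, ih.1, ih.2.2.symm⟩
  | trans h₁ h₂ ih₁ ih₂ => exact ⟨ih₁.1, ih₂.2.1, ih₁.2.2.trans ih₂.2.2⟩
  | gginv e =>
    refine ⟨noTau_isValid B (by decide) e, trivial, ?_⟩
    show B.act (-1) (B.act 1 e) = e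
    rw [← hB.act_add]; norm_num [hB.act_zero]
  | ginvg e =>
    refine ⟨noTau_isValid B (by decide) e, trivial, ?_⟩
    show B.act 1 (B.act (-1) e) = e
    rw [← hB.act_add]; norm_num [hB.act_zero]
  | tautau e h =>
    have h2 : B.tau e ∈ B.U := hB.tau_mem e h
    have h3 : B.tau (B.tau e) ∈ B.U := by rw [hB.tau_invol e h]; exact h
    exact ⟨⟨fun _ => ⟨h, h2⟩, fun _ => ⟨h2, h3⟩, trivial⟩, trivial, hB.tau_invol e h⟩
  | square e h =>
    have h1 : B.sigma e ∈ B.U := (hB.sigma_mem e).mp h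
    have h2 : B.tau (B.sigma e) ∈ B.U := by
      rw [hB.tau_sigma e h]; exact (hB.sigma_mem _).mp (hB.tau_mem e h)
    refine ⟨?_, ⟨fun _ => ⟨h, hB.tau_mem e h⟩, noTau_isValid B (noTau_replicate_g _) _⟩, ?_⟩
    · rw [B.isValid_append]
      refine ⟨noTau_isValid B (noTau_replicate_g _) _, ?_⟩
      rw [endpt_replicate_g B hB]
      exact ⟨fun _ => ⟨h1, h2⟩, trivial⟩
    · rw [B.endpt_append, endpt_replicate_g B hB]
      show B.tau (B.act (B.d e) e) = B.endpt (B.tau e) _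
      rw [endpt_replicate_g B hB]
      exact hB.tau_sigma e h
  | post u h hu ih =>
    refine ⟨(B.isValid_append _ _ _).mpr ⟨ih.1, hu⟩,
      (B.isValid_append _ _ _).mpr ⟨ih.2.1, by rw [← ih.2.2]; exact hu⟩, ?_⟩
    rw [B.endpt_append, B.endpt_append, ih.2.2]
  | pre e v hv h ih =>
    refine ⟨(B.isValid_append _ _ _).mpr ⟨hv, ih.1⟩,
      (B.isValid_append _ _ _).mpr ⟨hv, ih.2.1⟩, ?_⟩
    rw [B.endpt_append, B.endpt_append, ih.2.2]

theorem mem_U_act (hB : B.IsBrauer) {x : B.E} (hx : x ∈ B.U) (n : ℤ) :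
    B.act (n * B.d x) x ∈ B.U := (act_dmul_mem hB n x).mp hx

theorem tau_mem_U_act (hB : B.IsBrauer) {x : B.E} (hx : x ∈ B.U) (n : ℤ) :
    B.tau (B.act (n * B.d x) x) ∈ B.U := by
  rw [tau_act_dmul hB n x hx]
  exact (act_dmul_mem hB n _).mp (hB.tau_mem x hx)

theorem htp_square' (hB : B.IsBrauer) (x : B.E) (hx : x ∈ B.U) :
    Htp B x (gSteps (B.d x) ++ [Step.tau]) (Step.tau :: gSteps (B.d (B.tau x))) := by
  rw [gSteps_natCast, gSteps_natCast]
  exact Htp.square x hx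

theorem htp_commute_nat (hB : B.IsBrauer) (k : ℕ) :
    ∀ x ∈ B.U, Htp B x (gSteps ((k : ℤ) * B.d x) ++ [Step.tau])
      (Step.tau :: gSteps ((k : ℤ) * B.d (B.tau x))) := by
  induction k with
  | zero =>
    intro x hx
    rw [Nat.cast_zero, zero_mul, zero_mul, gSteps_zero]
    exact Htp.refl x [Step.tau] ⟨fun _ => ⟨hx, hB.tau_mem x hx⟩, trivial⟩
  | succ k ih =>
    intro x hx
    have hτ : B.tau x ∈ B.U := hB.tau_mem x hx
    set D : ℤ := (B.d x : ℤ) with hD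
    set D' : ℤ := (B.d (B.tau x) : ℤ) with hD'
    have hcast : ((k + 1 : ℕ) : ℤ) = (k : ℤ) + 1 := by push_cast; ring
    rw [hcast]
    -- y = σ x
    set y : B.E := B.act D x with hy
    have hyU : y ∈ B.U := by
      have := mem_U_act hB hx 1
      rwa [one_mul] at this
    have hdy : (B.d y : ℤ) = D := by rw [hy, hD]; exact_mod_cast hB.d_act D x
    have hτy : B.tau y = B.act D' (B.tau x) := by
      have := tau_act_dmul hB 1 x hx
      rwa [one_mul, one_mul] at this
    have hdτy : (B.d (B.tau y) : ℤ) = D' := by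
      rw [hτy, hD']; exact_mod_cast hB.d_act D' (B.tau x)
    -- step 1 : split off one σ-power
    have hend1 : B.endpt x (gSteps (((k : ℤ) + 1) * D)) = B.act (((k : ℤ) + 1) * D) x :=
      endpt_gSteps B hB x _
    have hv1 : B.IsValid (B.endpt x (gSteps (((k : ℤ) + 1) * D))) [Step.tau] := by
      rw [hend1]
      exact ⟨fun _ => ⟨mem_U_act hB hx _, tau_mem_U_act hB hx _⟩, trivial⟩
    have step1 : Htp B x (gSteps (((k : ℤ) + 1) * D) ++ [Step.tau])
        ((gSteps D ++ gSteps ((k : ℤ) * D)) ++ [Step.tau]) :=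
      Htp.post [Step.tau]
        (htp_pure B (noTau_gSteps _)
          (fun hm => by
            rcases List.mem_append.mp hm with h | h
            exacts [noTau_gSteps _ h, noTau_gSteps _ h])
          (by rw [wt_append, wt_gSteps, wt_gSteps, wt_gSteps]; ring) x) hv1
    refine step1.trans ?_
    rw [List.append_assoc]
    -- step 2 : use the IH at y
    have hend2 : B.endpt x (gSteps D) = y := by rw [endpt_gSteps B hB, hy]
    have step2 : Htp B x (gSteps D ++ (gSteps ((k : ℤ) * D) ++ [Step.tau]))
        (gSteps D ++ (Step.tau :: gSteps ((k : ℤ) * D'))) := by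
      refine Htp.pre x (gSteps D) (noTau_isValid B (noTau_gSteps _) x) ?_
      rw [hend2]
      have := ih y hyU
      rwa [hdy, hdτy] at this
    refine step2.trans ?_
    rw [show gSteps D ++ (Step.tau :: gSteps ((k : ℤ) * D'))
        = (gSteps D ++ [Step.tau]) ++ gSteps ((k : ℤ) * D') by simp]
    -- step 3 : square at x
    have step3 : Htp B x ((gSteps D ++ [Step.tau]) ++ gSteps ((k : ℤ) * D'))
        ((Step.tau :: gSteps D') ++ gSteps ((k : ℤ) * D')) := by
      refine Htp.post (gSteps ((k : ℤ) * D')) (htp_square' hB x hx) ?_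
      exact noTau_isValid B (noTau_gSteps _) _
    refine step3.trans ?_
    rw [show (Step.tau :: gSteps D') ++ gSteps ((k : ℤ) * D')
        = [Step.tau] ++ (gSteps D' ++ gSteps ((k : ℤ) * D')) by simp]
    -- step 4 : merge the powers after τ
    have step4 : Htp B x ([Step.tau] ++ (gSteps D' ++ gSteps ((k : ℤ) * D')))
        ([Step.tau] ++ gSteps (((k : ℤ) + 1) * D')) := by
      refine Htp.pre x [Step.tau] ⟨fun _ => ⟨hx, hτ⟩, trivial⟩ ?_
      refine htp_pure B (fun hm => by
          rcases List.mem_append.mp hm with h | h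
          exacts [noTau_gSteps _ h, noTau_gSteps _ h]) (noTau_gSteps _) ?_ _
      rw [wt_append, wt_gSteps, wt_gSteps, wt_gSteps]; ring
    simpa using step4

theorem htp_commute (hB : B.IsBrauer) (n : ℤ) (x : B.E) (hx : x ∈ B.U) :
    Htp B x (gSteps (n * B.d x) ++ [Step.tau])
      (Step.tau :: gSteps (n * B.d (B.tau x))) := by
  rcases le_or_gt 0 n with h | h
  · have := htp_commute_nat hB n.toNat x hx
    rwa [Int.toNat_of_nonneg h] at this
  · set m : ℤ := -n with hm
    have hm0 : 0 < m := by omega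
    have hτ : B.tau x ∈ B.U := hB.tau_mem x hx
    set D : ℤ := (B.d x : ℤ) with hD
    set D' : ℤ := (B.d (B.tau x) : ℤ) with hD'
    set y : B.E := B.act (n * D) x with hy
    have hyU : y ∈ B.U := mem_U_act hB hx n
    have hτyU : B.tau y ∈ B.U := tau_mem_U_act hB hx n
    have hdy : (B.d y : ℤ) = D := by rw [hy, hD]; exact_mod_cast hB.d_act _ x
    have hτy : B.tau y = B.act (n * D') (B.tau x) := tau_act_dmul hB n x hx
    have hdτy : (B.d (B.tau y) : ℤ) = D' := by
      rw [hτy, hD']; exact_mod_cast hB.d_act _ (B.tau x)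
    have hendn : B.endpt x (gSteps (n * D)) = y := by rw [endpt_gSteps B hB, hy]
    have hvnt : B.IsValid x (gSteps (n * D) ++ [Step.tau]) := by
      rw [B.isValid_append]
      refine ⟨noTau_isValid B (noTau_gSteps _) x, ?_⟩
      rw [hendn]
      exact ⟨fun _ => ⟨hyU, hτyU⟩, trivial⟩
    -- step 1 : insert a cancelling pair after τ
    have step1 : Htp B x (gSteps (n * D) ++ [Step.tau])
        ((gSteps (n * D) ++ [Step.tau]) ++ (gSteps (m * D') ++ gSteps (n * D'))) := by
      have := Htp.pre x (gSteps (n * D) ++ [Step.tau]) hvnt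
        (htp_pure B (l₁ := []) (l₂ := gSteps (m * D') ++ gSteps (n * D'))
          (by simp)
          (fun hmem => by
            rcases List.mem_append.mp hmem with h | h
            exacts [noTau_gSteps _ h, noTau_gSteps _ h])
          (by rw [wt_append, wt_gSteps, wt_gSteps]; show (0 : ℤ) = _; rw [hm]; ring) _)
      simpa using this
    refine step1.trans ?_
    rw [show (gSteps (n * D) ++ [Step.tau]) ++ (gSteps (m * D') ++ gSteps (n * D'))
        = gSteps (n * D) ++ (([Step.tau] ++ gSteps (m * D')) ++ gSteps (n * D')) by simp]
    -- step 2 : replace [τ] ++ g^(mD') by g^(mD) ++ [τ] using commute_nat at y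
    have hcnat : Htp B y ([Step.tau] ++ gSteps (m * D')) (gSteps (m * D) ++ [Step.tau]) := by
      have := (htp_commute_nat hB m.toNat y hyU).symm
      rw [Int.toNat_of_nonneg (le_of_lt hm0), hdy, hdτy] at this
      simpa using this
    have step2 : Htp B x (gSteps (n * D) ++ (([Step.tau] ++ gSteps (m * D')) ++ gSteps (n * D')))
        (gSteps (n * D) ++ ((gSteps (m * D) ++ [Step.tau]) ++ gSteps (n * D'))) := by
      refine Htp.pre x (gSteps (n * D)) (noTau_isValid B (noTau_gSteps _) x) ?_
      rw [hendn]
      refine Htp.post (gSteps (n * D')) hcnat (noTau_isValid B (noTau_gSteps _) _)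
    refine step2.trans ?_
    rw [show gSteps (n * D) ++ ((gSteps (m * D) ++ [Step.tau]) ++ gSteps (n * D'))
        = (gSteps (n * D) ++ gSteps (m * D)) ++ (Step.tau :: gSteps (n * D')) by simp]
    -- step 3 : cancel g^(nD) ++ g^(mD)
    have step3 : Htp B x ((gSteps (n * D) ++ gSteps (m * D)) ++ (Step.tau :: gSteps (n * D')))
        ([] ++ (Step.tau :: gSteps (n * D'))) := by
      refine Htp.post (Step.tau :: gSteps (n * D'))
        (htp_pure B (fun hmem => by
            rcases List.mem_append.mp hmem with h | h
            exacts [noTau_gSteps _ h, noTau_gSteps _ h]) (by simp)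
          (by rw [wt_append, wt_gSteps, wt_gSteps]; show _ = (0:ℤ); rw [hm]; ring) x) ?_
      have hend0 : B.endpt x (gSteps (n * D) ++ gSteps (m * D)) = x := by
        rw [B.endpt_append, endpt_gSteps B hB, endpt_gSteps B hB, ← hB.act_add]
        rw [show m * D + n * D = 0 by rw [hm]; ring, hB.act_zero]
      rw [hend0]
      exact ⟨fun _ => ⟨hx, hτ⟩, noTau_isValid B (noTau_gSteps _) _⟩
    refine step3.trans ?_
    rw [List.nil_append]
    exact Htp.refl x _ ⟨fun _ => ⟨hx, hτ⟩, noTau_isValid B (noTau_gSteps _) _⟩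

/-! ### the normal-form state machine -/

/-- States: last block length, remaining blocks (outermost first), σ-power. -/
abbrev St : Type := ℕ × List ℕ × ℤ

/-- Base point of the last block of a special walk with reversed block list `rest`. -/
def base (B : BrauerData) (e : B.E) : List ℕ → B.E
  | [] => e
  | j :: r => B.tau (B.act j (base B e r))

/-- One transition of the normal-form automaton. -/
def stepSt (B : BrauerData) (e : B.E) : Step → St → St
  | Step.g, (i, rest, n) =>
      if i + 1 = B.d (base B e rest) then (0, rest, n + 1) else (i + 1, rest, n)
  | Step.ginv, (i, rest, n) =>
      if i = 0 then (B.d (base B e rest) - 1, rest, n - 1) else (i - 1, rest, n)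
  | Step.tau, (i, rest, n) =>
      if i = 0 then
        match rest with
        | [] => (0, [0], n)
        | j :: r => (j, r, n)
      else (0, i :: rest, n)

def foldSt (B : BrauerData) (e : B.E) : St → List Step → St
  | s, [] => s
  | s, st :: l => foldSt B e (stepSt B e st s) l

theorem foldSt_append (B : BrauerData) (e : B.E) (s : St) (l₁ l₂ : List Step) :
    foldSt B e s (l₁ ++ l₂) = foldSt B e (foldSt B e s l₁) l₂ := by
  induction l₁ generalizing s with
  | nil => rfl
  | cons st t ih => exact ih _

/-- Validity of a reversed block list. -/
def VB (B : BrauerData) (e : B.E) : List ℕ → Prop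
  | [] => True
  | j :: r => VB B e r ∧ j < B.d (base B e r) ∧ (r ≠ [] → 0 < j) ∧
      B.act j (base B e r) ∈ B.U ∧ B.tau (B.act j (base B e r)) ∈ B.U

/-- Validity of a state. -/
def StV (B : BrauerData) (e : B.E) : St → Prop
  | (i, rest, _) => VB B e rest ∧ i < B.d (base B e rest)

/-- The actual current point represented by a state. -/
def actual (B : BrauerData) (e : B.E) : St → B.E
  | (i, rest, n) => B.act (i + n * B.d (base B e rest)) (base B e rest)

/-! ### computation of folds of pure powers -/

theorem foldSt_g_le (B : BrauerData) (e : B.E) (m : ℕ) :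
    ∀ (i : ℕ) (rest : List ℕ) (n : ℤ), i + m < B.d (base B e rest) →
      foldSt B e (i, rest, n) (List.replicate m Step.g) = (i + m, rest, n) := by
  induction m with
  | zero => intro i rest n _; rfl
  | succ m ih =>
    intro i rest n h
    rw [List.replicate_succ]
    show foldSt B e (stepSt B e Step.g (i, rest, n)) _ = _
    rw [show stepSt B e Step.g (i, rest, n) = (i + 1, rest, n) from by
      simp only [stepSt]; rw [if_neg (by omega)]]
    rw [ih (i + 1) rest n (by omega)]
    congr 1
    omega

theorem foldSt_g_D (B : BrauerData) (e : B.E) (i : ℕ) (rest : List ℕ) (n : ℤ)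
    (h : i < B.d (base B e rest)) :
    foldSt B e (i, rest, n) (List.replicate (B.d (base B e rest)) Step.g)
      = (i, rest, n + 1) := by
  have hD : 0 < B.d (base B e rest) := by omega
  rw [show B.d (base B e rest) = (B.d (base B e rest) - 1 - i) + (1 + i) by omega,
    List.replicate_add, List.replicate_add, foldSt_append, foldSt_append]
  rw [foldSt_g_le B e _ i rest n (by omega)]
  rw [show List.replicate 1 Step.g = [Step.g] from rfl]
  show foldSt B e (foldSt B e (stepSt B e Step.g _) []) _ = _
  rw [show stepSt B e Step.g (i + (B.d (base B e rest) - 1 - i), rest, n)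
      = (0, rest, n + 1) from by
    simp only [stepSt]; rw [if_pos (by omega)]]
  show foldSt B e (0, rest, n + 1) _ = _
  rw [foldSt_g_le B e i 0 rest (n + 1) (by omega)]
  congr 1
  omega

theorem foldSt_ginv_le (B : BrauerData) (e : B.E) (m : ℕ) :
    ∀ (i : ℕ) (rest : List ℕ) (n : ℤ), m ≤ i →
      foldSt B e (i, rest, n) (List.replicate m Step.ginv) = (i - m, rest, n) := by
  induction m with
  | zero => intro i rest n _; rw [List.replicate_zero]; show (i, rest, n) = _; simp
  | succ m ih =>
    intro i rest n h
    rw [List.replicate_succ]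
    show foldSt B e (stepSt B e Step.ginv (i, rest, n)) _ = _
    rw [show stepSt B e Step.ginv (i, rest, n) = (i - 1, rest, n) from by
      simp only [stepSt]; rw [if_neg (by omega)]]
    rw [ih (i - 1) rest n (by omega)]
    congr 1
    omega

theorem foldSt_ginv_D (B : BrauerData) (e : B.E) (i : ℕ) (rest : List ℕ) (n : ℤ)
    (h : i < B.d (base B e rest)) :
    foldSt B e (i, rest, n) (List.replicate (B.d (base B e rest)) Step.ginv)
      = (i, rest, n - 1) := by
  have hD : 0 < B.d (base B e rest) := by omega
  rw [show B.d (base B e rest) = i + (1 + (B.d (base B e rest) - 1 - i)) by omega,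
    List.replicate_add, List.replicate_add, foldSt_append, foldSt_append]
  rw [foldSt_ginv_le B e i i rest n (le_refl i)]
  rw [show List.replicate 1 Step.ginv = [Step.ginv] from rfl]
  show foldSt B e (foldSt B e (stepSt B e Step.ginv _) []) _ = _
  rw [show stepSt B e Step.ginv (i - i, rest, n)
      = (B.d (base B e rest) - 1, rest, n - 1) from by
    simp only [stepSt]; rw [if_pos (by omega)]]
  show foldSt B e (B.d (base B e rest) - 1, rest, n - 1) _ = _
  rw [foldSt_ginv_le B e _ _ rest (n - 1) (by omega)]
  congr 1
  omega

theorem foldSt_g_mulD (B : BrauerData) (e : B.E) (k : ℕ) (i : ℕ) (rest : List ℕ) (n : ℤ)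
    (h : i < B.d (base B e rest)) :
    foldSt B e (i, rest, n) (List.replicate (k * B.d (base B e rest)) Step.g)
      = (i, rest, n + k) := by
  induction k generalizing n with
  | zero => rw [zero_mul, List.replicate_zero]; show (i, rest, n) = _; simp
  | succ k ih =>
    rw [show (k + 1) * B.d (base B e rest) = B.d (base B e rest) + k * B.d (base B e rest)
      by ring, List.replicate_add, foldSt_append, foldSt_g_D B e i rest n h, ih (n + 1)]
    simp only [Prod.mk.injEq]
    exact ⟨trivial, trivial, by push_cast; ring⟩

theorem foldSt_ginv_mulD (B : BrauerData) (e : B.E) (k : ℕ) (i : ℕ) (rest : List ℕ) (n : ℤ)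
    (h : i < B.d (base B e rest)) :
    foldSt B e (i, rest, n) (List.replicate (k * B.d (base B e rest)) Step.ginv)
      = (i, rest, n - k) := by
  induction k generalizing n with
  | zero => rw [zero_mul, List.replicate_zero]; show (i, rest, n) = _; simp
  | succ k ih =>
    rw [show (k + 1) * B.d (base B e rest) = B.d (base B e rest) + k * B.d (base B e rest)
      by ring, List.replicate_add, foldSt_append, foldSt_ginv_D B e i rest n h, ih (n - 1)]
    simp only [Prod.mk.injEq]
    exact ⟨trivial, trivial, by push_cast; ring⟩

theorem foldSt_gSteps_mulD (B : BrauerData) (e : B.E) (ν : ℤ) (i : ℕ) (rest : List ℕ)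
    (n : ℤ) (h : i < B.d (base B e rest)) :
    foldSt B e (i, rest, n) (gSteps (ν * B.d (base B e rest))) = (i, rest, n + ν) := by
  rcases le_or_gt 0 ν with hν | hν
  · obtain ⟨k, rfl⟩ : ∃ k : ℕ, ν = (k : ℤ) := ⟨ν.toNat, (Int.toNat_of_nonneg hν).symm⟩
    have hg : gSteps ((k : ℤ) * B.d (base B e rest))
        = List.replicate (k * B.d (base B e rest)) Step.g := by
      rw [show ((k : ℤ) * B.d (base B e rest)) = ((k * B.d (base B e rest) : ℕ) : ℤ) by
        push_cast; ring, gSteps_natCast]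
    rw [hg, foldSt_g_mulD B e k i rest n h]
  · obtain ⟨k, rfl⟩ : ∃ k : ℕ, ν = -(k : ℤ) := ⟨(-ν).toNat, by omega⟩
    have hD : 0 < B.d (base B e rest) := by omega
    have hk0 : 0 < k := by omega
    have hg : gSteps (-(k : ℤ) * B.d (base B e rest))
        = List.replicate (k * B.d (base B e rest)) Step.ginv := by
      unfold gSteps
      rw [if_neg (by
        simp only [not_le]
        have h1 : (0:ℤ) < (B.d (base B e rest) : ℤ) := by exact_mod_cast hD
        have h2 : -(k:ℤ) < 0 := by omega
        exact mul_neg_of_neg_of_pos h2 h1)]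
      rw [show -(-(k : ℤ) * B.d (base B e rest)) = ((k * B.d (base B e rest) : ℕ) : ℤ) by
        push_cast; ring, Int.toNat_natCast]
    rw [hg, foldSt_ginv_mulD B e k i rest n h]
    simp [sub_eq_add_neg]

theorem actual_eq (B : BrauerData) (e : B.E) (hB : B.IsBrauer) (i : ℕ) (rest : List ℕ)
    (n : ℤ) :
    actual B e (i, rest, n)
      = B.act (n * B.d (B.act (i : ℤ) (base B e rest))) (B.act (i : ℤ) (base B e rest)) := by
  show B.act ((i : ℤ) + n * B.d (base B e rest)) (base B e rest) = _
  rw [hB.d_act, show (i : ℤ) + n * B.d (base B e rest)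
      = n * B.d (base B e rest) + (i : ℤ) by ring, hB.act_add]

/-- The data extracted from a state whose actual point lies in `U`. -/
theorem state_mem_U (B : BrauerData) (e : B.E) (hB : B.IsBrauer) {i : ℕ} {rest : List ℕ}
    {n : ℤ} {x : B.E} (hx : actual B e (i, rest, n) = x) (hxU : x ∈ B.U) :
    B.act (i : ℤ) (base B e rest) ∈ B.U ∧
    B.tau (B.act (i : ℤ) (base B e rest)) ∈ B.U ∧
    B.tau x = B.act (n * B.d (B.tau (B.act (i : ℤ) (base B e rest))))
      (B.tau (B.act (i : ℤ) (base B e rest))) := by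
  set t0 := B.act (i : ℤ) (base B e rest) with ht0def
  have hx' : B.act (n * B.d t0) t0 = x := by rw [← actual_eq B e hB, hx]
  have ht0 : t0 ∈ B.U := (act_dmul_mem hB n t0).mpr (hx' ▸ hxU)
  have hcomm : B.tau x = B.act (n * B.d (B.tau t0)) (B.tau t0) := by
    rw [← hx', tau_act_dmul hB n t0 ht0]
  have hτt0 : B.tau t0 ∈ B.U := by
    refine (act_dmul_mem hB n (B.tau t0)).mpr ?_
    rw [← hcomm]
    exact hB.tau_mem x hxU
  exact ⟨ht0, hτt0, hcomm⟩

theorem foldSt_track (B : BrauerData) (e : B.E) (hB : B.IsBrauer) (l : List Step) :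
    ∀ (s : St) (x : B.E), StV B e s → actual B e s = x → B.IsValid x l →
      StV B e (foldSt B e s l) ∧ actual B e (foldSt B e s l) = B.endpt x l := by
  induction l with
  | nil => intro s x hs hx _; exact ⟨hs, hx⟩
  | cons st t ih =>
    rintro ⟨i, rest, n⟩ x hs hx hv
    obtain ⟨hvτ, hv2⟩ := hv
    have key : StV B e (stepSt B e st (i, rest, n)) ∧
        actual B e (stepSt B e st (i, rest, n)) = B.stepFun st x := by
      obtain ⟨hVB, hi⟩ := hs
      cases st with
      | g =>
        by_cases h : i + 1 = B.d (base B e rest)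
        · rw [show stepSt B e Step.g (i, rest, n) = (0, rest, n + 1) from by
            simp only [stepSt]; rw [if_pos h]]
          refine ⟨⟨hVB, by omega⟩, ?_⟩
          show B.act ((0 : ℕ) + (n + 1) * B.d (base B e rest)) (base B e rest)
            = B.act 1 x
          rw [← hx]
          show _ = B.act 1 (B.act ((i : ℤ) + n * B.d (base B e rest)) (base B e rest))
          rw [← hB.act_add]
          congr 1
          have : (i : ℤ) + 1 = (B.d (base B e rest) : ℤ) := by exact_mod_cast h
          push_cast
          linarith
        · rw [show stepSt B e Step.g (i, rest, n) = (i + 1, rest, n) from by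
            simp only [stepSt]; rw [if_neg h]]
          refine ⟨⟨hVB, by omega⟩, ?_⟩
          show B.act (((i + 1 : ℕ) : ℤ) + n * B.d (base B e rest)) (base B e rest)
            = B.act 1 x
          rw [← hx]
          show _ = B.act 1 (B.act ((i : ℤ) + n * B.d (base B e rest)) (base B e rest))
          rw [← hB.act_add]
          congr 1
          push_cast
          ring
      | ginv =>
        have hD : 0 < B.d (base B e rest) := hB.dpos _
        by_cases h : i = 0
        · rw [show stepSt B e Step.ginv (i, rest, n)
              = (B.d (base B e rest) - 1, rest, n - 1) from by
            simp only [stepSt]; rw [if_pos h]]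
          refine ⟨⟨hVB, by omega⟩, ?_⟩
          show B.act (((B.d (base B e rest) - 1 : ℕ) : ℤ) + (n - 1) * B.d (base B e rest))
              (base B e rest) = B.act (-1) x
          rw [← hx]
          show _ = B.act (-1) (B.act ((i : ℤ) + n * B.d (base B e rest)) (base B e rest))
          rw [← hB.act_add]
          congr 1
          have hc : ((B.d (base B e rest) - 1 : ℕ) : ℤ) = (B.d (base B e rest) : ℤ) - 1 := by
            omega
          rw [hc]
          subst h
          push_cast
          ring
        · rw [show stepSt B e Step.ginv (i, rest, n) = (i - 1, rest, n) from by
            simp only [stepSt]; rw [if_neg h]]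
          refine ⟨⟨hVB, by omega⟩, ?_⟩
          show B.act (((i - 1 : ℕ) : ℤ) + n * B.d (base B e rest)) (base B e rest)
            = B.act (-1) x
          rw [← hx]
          show _ = B.act (-1) (B.act ((i : ℤ) + n * B.d (base B e rest)) (base B e rest))
          rw [← hB.act_add]
          congr 1
          have hc : ((i - 1 : ℕ) : ℤ) = (i : ℤ) - 1 := by omega
          rw [hc]
          ring
      | tau =>
        obtain ⟨hxU, hτxU⟩ := hvτ rfl
        obtain ⟨ht0, hτt0, hcomm⟩ := state_mem_U B e hB hx hxU
        by_cases h : i = 0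
        · subst h
          cases rest with
          | nil =>
            rw [show stepSt B e Step.tau (0, ([] : List ℕ), n) = (0, [0], n) from rfl]
            refine ⟨⟨⟨trivial, hB.dpos _, fun hc => absurd rfl hc, ht0, hτt0⟩,
              hB.dpos _⟩, ?_⟩
            show B.act ((0 : ℕ) + n * B.d (base B e [0])) (base B e [0]) = B.tau x
            have hb : base B e [0] = B.tau (B.act ((0 : ℕ) : ℤ) (base B e [])) := rfl
            rw [hb, hcomm]
            push_cast
            rw [zero_add]
          | cons j r =>
            obtain ⟨hVBr, hj, hjpos, hjU, hτjU⟩ := hVB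
            rw [show stepSt B e Step.tau (0, j :: r, n) = (j, r, n) from rfl]
            refine ⟨⟨hVBr, hj⟩, ?_⟩
            -- actual (j, r, n) = τ x
            have hu : B.tau (B.act ((0 : ℕ) : ℤ) (base B e (j :: r)))
                = B.act (j : ℤ) (base B e r) := by
              show B.tau (B.act ((0 : ℕ) : ℤ) (B.tau (B.act (j : ℤ) (base B e r)))) = _
              rw [show ((0 : ℕ) : ℤ) = 0 from rfl, hB.act_zero]
              exact hB.tau_invol _ hjU
            rw [actual_eq B e hB, show B.stepFun Step.tau x = B.tau x from rfl, hcomm, hu]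
        · rw [show stepSt B e Step.tau (i, rest, n) = (0, i :: rest, n) from by
            simp only [stepSt]; rw [if_neg h]]
          refine ⟨⟨⟨hVB, hi, fun _ => by omega, ht0, hτt0⟩, hB.dpos _⟩, ?_⟩
          have hb : base B e (i :: rest) = B.tau (B.act (i : ℤ) (base B e rest)) := rfl
          show B.act ((0 : ℕ) + n * B.d (base B e (i :: rest))) (base B e (i :: rest))
            = B.tau x
          rw [hb, hcomm]
          push_cast
          rw [zero_add]
    have := ih (stepSt B e st (i, rest, n)) (B.stepFun st x) key.1 key.2 hv2
    exact this

theorem htp_foldSt (B : BrauerData) (e : B.E) (hB : B.IsBrauer) {x : B.E}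
    {l₁ l₂ : List Step} (h : Htp B x l₁ l₂) :
    ∀ s : St, StV B e s → actual B e s = x → foldSt B e s l₁ = foldSt B e s l₂ := by
  induction h with
  | refl => intros; rfl
  | symm h ih => intro s hs hx; exact (ih s hs hx).symm
  | trans h₁ h₂ ih₁ ih₂ => intro s hs hx; exact (ih₁ s hs hx).trans (ih₂ s hs hx)
  | gginv e' =>
    rintro ⟨i, rest, n⟩ ⟨hVB, hi⟩ hx
    show stepSt B e Step.ginv (stepSt B e Step.g (i, rest, n)) = (i, rest, n)
    by_cases h : i + 1 = B.d (base B e rest)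
    · rw [show stepSt B e Step.g (i, rest, n) = (0, rest, n + 1) from by
        simp only [stepSt]; rw [if_pos h]]
      rw [show stepSt B e Step.ginv (0, rest, n + 1)
          = (B.d (base B e rest) - 1, rest, n + 1 - 1) from by simp [stepSt]]
      rw [show B.d (base B e rest) - 1 = i by omega, show n + 1 - 1 = n by omega]
    · rw [show stepSt B e Step.g (i, rest, n) = (i + 1, rest, n) from by
        simp only [stepSt]; rw [if_neg h]]
      rw [show stepSt B e Step.ginv (i + 1, rest, n) = (i + 1 - 1, rest, n) from by
        simp only [stepSt]; rw [if_neg (by omega)]]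
      simp
  | ginvg e' =>
    rintro ⟨i, rest, n⟩ ⟨hVB, hi⟩ hx
    have hD : 0 < B.d (base B e rest) := hB.dpos _
    show stepSt B e Step.g (stepSt B e Step.ginv (i, rest, n)) = (i, rest, n)
    by_cases h : i = 0
    · rw [show stepSt B e Step.ginv (i, rest, n)
          = (B.d (base B e rest) - 1, rest, n - 1) from by
        simp only [stepSt]; rw [if_pos h]]
      rw [show stepSt B e Step.g (B.d (base B e rest) - 1, rest, n - 1)
          = (0, rest, n - 1 + 1) from by
        simp only [stepSt]; rw [if_pos (by omega)]]
      rw [show n - 1 + 1 = n by omega, h]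
    · rw [show stepSt B e Step.ginv (i, rest, n) = (i - 1, rest, n) from by
        simp only [stepSt]; rw [if_neg h]]
      rw [show stepSt B e Step.g (i - 1, rest, n) = (i - 1 + 1, rest, n) from by
        simp only [stepSt]; rw [if_neg (by omega)]]
      rw [show i - 1 + 1 = i by omega]
  | tautau e' hU =>
    rintro ⟨i, rest, n⟩ ⟨hVB, hi⟩ hx
    show stepSt B e Step.tau (stepSt B e Step.tau (i, rest, n)) = (i, rest, n)
    by_cases h : i = 0
    · subst h
      cases rest with
      | nil => rfl
      | cons j r =>
        obtain ⟨hVBr, hj, hjpos, hjU, hτjU⟩ := hVB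
        rw [show stepSt B e Step.tau (0, j :: r, n) = (j, r, n) from rfl]
        by_cases hj0 : j = 0
        · subst hj0
          have hr : r = [] := by
            by_contra hc
            exact absurd (hjpos hc) (by omega)
          subst hr
          rfl
        · rw [show stepSt B e Step.tau (j, r, n) = (0, j :: r, n) from by
            simp only [stepSt]; rw [if_neg hj0]]
    · rw [show stepSt B e Step.tau (i, rest, n) = (0, i :: rest, n) from by
        simp only [stepSt]; rw [if_neg h]]
      rw [show stepSt B e Step.tau (0, i :: rest, n) = (i, rest, n) from rfl]
  | square e' hU =>
    rintro ⟨i, rest, n⟩ ⟨hVB, hi⟩ hx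
    obtain ⟨ht0, hτt0, hcomm⟩ := state_mem_U B e hB hx hU
    have hde' : B.d e' = B.d (base B e rest) := by
      rw [← hx]
      show B.d (B.act ((i : ℤ) + n * B.d (base B e rest)) (base B e rest)) = _
      exact hB.d_act _ _
    have hdτe' : B.d (B.tau e') = B.d (B.tau (B.act (i : ℤ) (base B e rest))) := by
      rw [hcomm]
      exact hB.d_act _ _
    rw [foldSt_append]
    rw [show List.replicate (B.d e') Step.g = List.replicate (B.d (base B e rest)) Step.g
      from by rw [hde']]
    rw [foldSt_g_D B e i rest n hi]
    show stepSt B e Step.tau (i, rest, n + 1)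
      = foldSt B e (stepSt B e Step.tau (i, rest, n)) (List.replicate (B.d (B.tau e')) Step.g)
    by_cases h : i = 0
    · subst h
      cases rest with
      | nil =>
        rw [show stepSt B e Step.tau (0, ([] : List ℕ), n + 1) = (0, [0], n + 1) from rfl,
          show stepSt B e Step.tau (0, ([] : List ℕ), n) = (0, [0], n) from rfl]
        have hd : B.d (B.tau e') = B.d (base B e [0]) := by
          rw [hdτe']
          rfl
        rw [hd, foldSt_g_D B e 0 [0] n (hB.dpos _)]
      | cons j r =>
        obtain ⟨hVBr, hj, hjpos, hjU, hτjU⟩ := hVB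
        rw [show stepSt B e Step.tau (0, j :: r, n + 1) = (j, r, n + 1) from rfl,
          show stepSt B e Step.tau (0, j :: r, n) = (j, r, n) from rfl]
        have hd : B.d (B.tau e') = B.d (base B e r) := by
          rw [hdτe']
          show B.d (B.tau (B.act ((0 : ℕ) : ℤ) (B.tau (B.act (j : ℤ) (base B e r))))) = _
          rw [show ((0 : ℕ) : ℤ) = 0 from rfl, hB.act_zero, hB.tau_invol _ hjU]
          exact hB.d_act _ _
        rw [hd, foldSt_g_D B e j r n hj]
    · rw [show stepSt B e Step.tau (i, rest, n + 1) = (0, i :: rest, n + 1) from by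
        simp only [stepSt]; rw [if_neg h],
        show stepSt B e Step.tau (i, rest, n) = (0, i :: rest, n) from by
        simp only [stepSt]; rw [if_neg h]]
      have hd : B.d (B.tau e') = B.d (base B e (i :: rest)) := by
        rw [hdτe']
        rfl
      rw [hd, foldSt_g_D B e 0 (i :: rest) n (hB.dpos _)]
  | post u h hu ih =>
    intro s hs hx
    rw [foldSt_append, foldSt_append, ih s hs hx]
  | pre e' v hv h ih =>
    intro s hs hx
    rw [foldSt_append, foldSt_append]
    obtain ⟨hs', hx'⟩ := foldSt_track B e hB v s e' hs hx hv
    exact ih _ hs' hx'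

/-! ### the special walk associated to a state -/

def walkOf (B : BrauerData) : List ℕ → List Step
  | [] => []
  | j :: r => walkOf B r ++ (List.replicate j Step.g ++ [Step.tau])

theorem walkOf_valid (B : BrauerData) (e : B.E) (hB : B.IsBrauer) :
    ∀ rest : List ℕ, VB B e rest →
      B.IsValid e (walkOf B rest) ∧ B.endpt e (walkOf B rest) = base B e rest := by
  intro rest h
  induction rest with
  | nil => exact ⟨trivial, rfl⟩
  | cons j r ih =>
    obtain ⟨hVBr, hj, hjpos, hjU, hτjU⟩ := h
    obtain ⟨hv, hend⟩ := ih hVBr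
    constructor
    · rw [show walkOf B (j :: r) = walkOf B r ++ (List.replicate j Step.g ++ [Step.tau])
        from rfl, B.isValid_append]
      refine ⟨hv, ?_⟩
      rw [hend, B.isValid_append]
      refine ⟨noTau_isValid B (noTau_replicate_g _) _, ?_⟩
      rw [endpt_replicate_g B hB]
      exact ⟨fun _ => ⟨hjU, hτjU⟩, trivial⟩
    · rw [show walkOf B (j :: r) = walkOf B r ++ (List.replicate j Step.g ++ [Step.tau])
        from rfl, B.endpt_append, hend, B.endpt_append, endpt_replicate_g B hB]
      rfl

/-- The walk encoded by a state. -/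
def stWalk (B : BrauerData) (e : B.E) : St → List Step
  | (i, rest, n) =>
      walkOf B rest ++ (List.replicate i Step.g ++ gSteps (n * B.d (base B e rest)))

theorem stWalk_valid (B : BrauerData) (e : B.E) (hB : B.IsBrauer) {i : ℕ}
    {rest : List ℕ} {n : ℤ} (hs : StV B e (i, rest, n)) :
    B.IsValid e (stWalk B e (i, rest, n)) ∧
      B.endpt e (stWalk B e (i, rest, n)) = actual B e (i, rest, n) := by
  obtain ⟨hVB, hi⟩ := hs
  obtain ⟨hv, hend⟩ := walkOf_valid B e hB rest hVB
  constructor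
  · rw [show stWalk B e (i, rest, n) = walkOf B rest
        ++ (List.replicate i Step.g ++ gSteps (n * B.d (base B e rest))) from rfl,
      B.isValid_append]
    refine ⟨hv, noTau_isValid B ?_ _⟩
    intro hmem
    rcases List.mem_append.mp hmem with h | h
    exacts [noTau_replicate_g _ h, noTau_gSteps _ h]
  · rw [show stWalk B e (i, rest, n) = walkOf B rest
        ++ (List.replicate i Step.g ++ gSteps (n * B.d (base B e rest))) from rfl,
      B.endpt_append, hend, B.endpt_append, endpt_replicate_g B hB, endpt_gSteps B hB,
      ← hB.act_add]
    show B.act (n * B.d (base B e rest) + (i : ℤ)) (base B e rest)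
      = B.act ((i : ℤ) + n * B.d (base B e rest)) (base B e rest)
    rw [add_comm]

/-! ### reconstruction of `IsSpecial` from a valid state -/

theorem specialTail_isSpecial (B : BrauerData) {x : B.E} {l : List Step}
    (h : SpecialTail B x l) : IsSpecial B x l := by
  cases h with
  | last e i h => exact IsSpecial.single x i h
  | cons e i h0 h hU hU' ht => exact IsSpecial.multi x i h hU hU' ht

theorem vb_cont (B : BrauerData) (e : B.E) (hB : B.IsBrauer) :
    ∀ rest : List ℕ, VB B e rest → ∀ l : List Step,
      SpecialTail B (base B e rest) l → IsSpecial B e (walkOf B rest ++ l) := by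
  intro rest
  induction rest with
  | nil =>
    intro _ l hst
    simpa [walkOf, base] using specialTail_isSpecial B hst
  | cons j r ih =>
    rintro ⟨hVBr, hj, hjpos, hjU, hτjU⟩ l hst
    by_cases hj0 : j = 0
    · have hr : r = [] := by
        by_contra hc
        exact absurd (hjpos hc) (by omega)
      subst hr
      subst hj0
      have := IsSpecial.multi e 0 (by simpa [base] using hj) hjU hτjU hst
      simpa [walkOf] using this
    · have hc := SpecialTail.cons (base B e r) j (by omega) hj hjU hτjU hst
      have := ih hVBr _ hc
      rw [show walkOf B (j :: r) = walkOf B r ++ (List.replicate j Step.g ++ [Step.tau])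
        from rfl]
      simpa using this

theorem state_special (B : BrauerData) (e : B.E) (hB : B.IsBrauer) {i : ℕ}
    {rest : List ℕ} {n : ℤ} (hs : StV B e (i, rest, n)) :
    IsSpecial B e (walkOf B rest ++ List.replicate i Step.g) :=
  vb_cont B e hB rest hs.1 _ (SpecialTail.last (base B e rest) i hs.2)

/-! ### folds of special walks -/

theorem stepSt_tau_nil (B : BrauerData) (e : B.E) (i : ℕ) (n : ℤ) :
    stepSt B e Step.tau (i, [], n) = (0, [i], n) := by
  by_cases h : i = 0
  · subst h; rfl
  · simp only [stepSt]; rw [if_neg h]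

theorem foldSt_specialTail (B : BrauerData) (e : B.E) (hB : B.IsBrauer) {x : B.E}
    {t : List Step} (h : SpecialTail B x t) :
    ∀ rest₀ : List ℕ, base B e rest₀ = x →
      ∃ (i' : ℕ) (rest' : List ℕ), foldSt B e (0, rest₀, 0) t = (i', rest', 0) ∧
        walkOf B rest' ++ List.replicate i' Step.g = walkOf B rest₀ ++ t := by
  induction h with
  | last x' i h =>
    intro rest₀ hb
    refine ⟨i, rest₀, ?_, rfl⟩
    rw [foldSt_g_le B e i 0 rest₀ 0 (by rw [hb]; omega)]
    simp
  | @cons x' i h0 h hU hU' l' ht ih =>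
    intro rest₀ hb
    rw [show List.replicate i Step.g ++ Step.tau :: l'
        = (List.replicate i Step.g ++ [Step.tau]) ++ l' from by simp, foldSt_append,
      foldSt_append]
    rw [foldSt_g_le B e i 0 rest₀ 0 (by rw [hb]; omega)]
    simp only [Nat.zero_add]
    rw [show foldSt B e (i, rest₀, 0) [Step.tau]
        = stepSt B e Step.tau (i, rest₀, 0) from rfl]
    rw [show stepSt B e Step.tau (i, rest₀, 0) = (0, i :: rest₀, 0) from by
      simp only [stepSt]; rw [if_neg (by omega)]]
    obtain ⟨i', rest', heq, hwalk⟩ := ih (i :: rest₀) (by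
      show B.tau (B.act (i : ℤ) (base B e rest₀)) = _
      rw [hb])
    refine ⟨i', rest', heq, ?_⟩
    rw [hwalk, show walkOf B (i :: rest₀)
        = walkOf B rest₀ ++ (List.replicate i Step.g ++ [Step.tau]) from rfl]
    simp

theorem foldSt_special (B : BrauerData) (e : B.E) (hB : B.IsBrauer) {v : List Step}
    (h : IsSpecial B e v) :
    ∃ (i : ℕ) (rest : List ℕ), foldSt B e (0, [], 0) v = (i, rest, 0) ∧
      walkOf B rest ++ List.replicate i Step.g = v := by
  cases h with
  | single i h =>
    refine ⟨i, [], ?_, by simp [walkOf]⟩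
    rw [foldSt_g_le B e i 0 [] 0 (by show 0 + i < B.d e; omega)]
    simp
  | @multi i h hU hU' l' ht =>
    rw [show List.replicate i Step.g ++ Step.tau :: l'
        = (List.replicate i Step.g ++ [Step.tau]) ++ l' from by simp, foldSt_append,
      foldSt_append]
    rw [foldSt_g_le B e i 0 [] 0 (by show 0 + i < B.d e; omega)]
    simp only [Nat.zero_add]
    rw [show foldSt B e (i, [], 0) [Step.tau]
        = stepSt B e Step.tau (i, [], 0) from rfl, stepSt_tau_nil]
    obtain ⟨i', rest', heq, hwalk⟩ := foldSt_specialTail B e hB ht [i] rfl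
    refine ⟨i', rest', heq, ?_⟩
    rw [hwalk, show walkOf B [i]
        = walkOf B [] ++ (List.replicate i Step.g ++ [Step.tau]) from rfl]
    simp [walkOf]

theorem noTau_append {l₁ l₂ : List Step} (h₁ : Step.tau ∉ l₁) (h₂ : Step.tau ∉ l₂) :
    Step.tau ∉ l₁ ++ l₂ := fun hm => (List.mem_append.mp hm).elim h₁ h₂

/-- The key one-step homotopy: appending a step to the walk of a state is
homotopic to the walk of the updated state. -/
theorem htp_step (B : BrauerData) (e : B.E) (hB : B.IsBrauer) (st : Step) (i : ℕ)
    (rest : List ℕ) (n : ℤ) (hs : StV B e (i, rest, n)) {x : B.E}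
    (hx : actual B e (i, rest, n) = x)
    (hτ : st = Step.tau → x ∈ B.U ∧ B.tau x ∈ B.U) :
    Htp B e (stWalk B e (i, rest, n) ++ [st])
      (stWalk B e (stepSt B e st (i, rest, n))) := by
  obtain ⟨hVB, hi⟩ := hs
  obtain ⟨hvW, hendW⟩ := walkOf_valid B e hB rest hVB
  have hD0 : 0 < B.d (base B e rest) := hB.dpos _
  cases st with
  | g =>
    rw [show stWalk B e (i, rest, n) ++ [Step.g] = walkOf B rest
        ++ ((List.replicate i Step.g ++ gSteps (n * B.d (base B e rest))) ++ [Step.g])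
        from by simp [stWalk]]
    by_cases h : i + 1 = B.d (base B e rest)
    · rw [show stepSt B e Step.g (i, rest, n) = (0, rest, n + 1) from by
        simp only [stepSt]; rw [if_pos h]]
      rw [show stWalk B e (0, rest, n + 1) = walkOf B rest
          ++ (List.replicate 0 Step.g ++ gSteps ((n + 1) * B.d (base B e rest)))
          from rfl]
      refine Htp.pre e (walkOf B rest) hvW ?_
      refine htp_pure B (noTau_append (noTau_append (noTau_replicate_g _)
        (noTau_gSteps _)) (by decide)) (noTau_append (noTau_replicate_g _)
        (noTau_gSteps _)) ?_ _
      simp only [wt_append, wt_replicate_g, wt_gSteps, wt_g_single]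
      have hc : (i : ℤ) + 1 = (B.d (base B e rest) : ℤ) := by exact_mod_cast h
      push_cast
      linarith [hc]
    · rw [show stepSt B e Step.g (i, rest, n) = (i + 1, rest, n) from by
        simp only [stepSt]; rw [if_neg h]]
      rw [show stWalk B e (i + 1, rest, n) = walkOf B rest
          ++ (List.replicate (i + 1) Step.g ++ gSteps (n * B.d (base B e rest)))
          from rfl]
      refine Htp.pre e (walkOf B rest) hvW ?_
      refine htp_pure B (noTau_append (noTau_append (noTau_replicate_g _)
        (noTau_gSteps _)) (by decide)) (noTau_append (noTau_replicate_g _)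
        (noTau_gSteps _)) ?_ _
      simp only [wt_append, wt_replicate_g, wt_gSteps, wt_g_single]
      push_cast
      ring
  | ginv =>
    rw [show stWalk B e (i, rest, n) ++ [Step.ginv] = walkOf B rest
        ++ ((List.replicate i Step.g ++ gSteps (n * B.d (base B e rest))) ++ [Step.ginv])
        from by simp [stWalk]]
    by_cases h : i = 0
    · rw [show stepSt B e Step.ginv (i, rest, n)
          = (B.d (base B e rest) - 1, rest, n - 1) from by
        simp only [stepSt]; rw [if_pos h]]
      rw [show stWalk B e (B.d (base B e rest) - 1, rest, n - 1) = walkOf B rest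
          ++ (List.replicate (B.d (base B e rest) - 1) Step.g
            ++ gSteps ((n - 1) * B.d (base B e rest))) from rfl]
      refine Htp.pre e (walkOf B rest) hvW ?_
      refine htp_pure B (noTau_append (noTau_append (noTau_replicate_g _)
        (noTau_gSteps _)) (by decide)) (noTau_append (noTau_replicate_g _)
        (noTau_gSteps _)) ?_ _
      simp only [wt_append, wt_replicate_g, wt_gSteps, wt_ginv_single]
      have hc : ((B.d (base B e rest) - 1 : ℕ) : ℤ) = (B.d (base B e rest) : ℤ) - 1 := by
        omega
      subst h
      rw [hc]
      push_cast
      ring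
    · rw [show stepSt B e Step.ginv (i, rest, n) = (i - 1, rest, n) from by
        simp only [stepSt]; rw [if_neg h]]
      rw [show stWalk B e (i - 1, rest, n) = walkOf B rest
          ++ (List.replicate (i - 1) Step.g ++ gSteps (n * B.d (base B e rest)))
          from rfl]
      refine Htp.pre e (walkOf B rest) hvW ?_
      refine htp_pure B (noTau_append (noTau_append (noTau_replicate_g _)
        (noTau_gSteps _)) (by decide)) (noTau_append (noTau_replicate_g _)
        (noTau_gSteps _)) ?_ _
      simp only [wt_append, wt_replicate_g, wt_gSteps, wt_ginv_single]
      have hc : ((i - 1 : ℕ) : ℤ) = (i : ℤ) - 1 := by omega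
      rw [hc]
      ring
  | tau =>
    obtain ⟨hxU, hτxU⟩ := hτ rfl
    obtain ⟨ht0, hτt0, hcomm⟩ := state_mem_U B e hB hx hxU
    by_cases h : i = 0
    · subst h
      cases rest with
      | nil =>
        -- push onto the empty stack
        rw [show stepSt B e Step.tau (0, ([] : List ℕ), n) = (0, [0], n) from rfl]
        have hv : B.IsValid e (walkOf B [] ++ List.replicate 0 Step.g) := by
          rw [B.isValid_append]
          exact ⟨hvW, noTau_isValid B (noTau_replicate_g _) _⟩
        have hend : B.endpt e (walkOf B [] ++ List.replicate 0 Step.g)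
            = B.act ((0 : ℕ) : ℤ) (base B e []) := by
          rw [B.endpt_append, hendW, endpt_replicate_g B hB]
        have inner := htp_commute hB n (B.act ((0 : ℕ) : ℤ) (base B e [])) ht0
        have inner' : Htp B (B.endpt e (walkOf B [] ++ List.replicate 0 Step.g))
            (gSteps (n * B.d (B.act ((0 : ℕ) : ℤ) (base B e []))) ++ [Step.tau])
            (Step.tau :: gSteps (n * B.d (B.tau (B.act ((0 : ℕ) : ℤ) (base B e []))))) := by
          rw [hend]
          exact inner
        have h2 := Htp.pre e (walkOf B [] ++ List.replicate 0 Step.g) hv inner'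
        have hdt0 : B.d (B.act ((0 : ℕ) : ℤ) (base B e [])) = B.d (base B e []) :=
          hB.d_act _ _
        rw [hdt0] at h2
        rw [show stWalk B e (0, ([] : List ℕ), n) ++ [Step.tau]
            = (walkOf B [] ++ List.replicate 0 Step.g)
              ++ (gSteps (n * B.d (base B e [])) ++ [Step.tau]) from by simp [stWalk]]
        rw [show stWalk B e (0, [0], n) = (walkOf B [] ++ List.replicate 0 Step.g)
            ++ (Step.tau :: gSteps (n * B.d (B.tau (B.act ((0 : ℕ) : ℤ) (base B e [])))))
            from by simp [stWalk, walkOf, base]]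
        exact h2
      | cons j r =>
        -- pop
        obtain ⟨hVBr, hj, hjpos, hjU, hτjU⟩ := hVB
        obtain ⟨hvWr, hendWr⟩ := walkOf_valid B e hB r hVBr
        rw [show stepSt B e Step.tau (0, j :: r, n) = (j, r, n) from rfl]
        have hv : B.IsValid e (walkOf B r ++ List.replicate j Step.g) := by
          rw [B.isValid_append]
          exact ⟨hvWr, noTau_isValid B (noTau_replicate_g _) _⟩
        have hend : B.endpt e (walkOf B r ++ List.replicate j Step.g)
            = B.act (j : ℤ) (base B e r) := by
          rw [B.endpt_append, hendWr, endpt_replicate_g B hB]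
        -- inner homotopy at u = act j (base r)
        have hττ : B.tau (B.tau (B.act (j : ℤ) (base B e r))) = B.act (j : ℤ) (base B e r) :=
          hB.tau_invol _ hjU
        have hc := (htp_commute hB n (B.act (j : ℤ) (base B e r)) hjU).symm
        have hvld : B.IsValid (B.endpt (B.act (j : ℤ) (base B e r))
            (Step.tau :: gSteps (n * B.d (B.tau (B.act (j : ℤ) (base B e r))))))
            [Step.tau] := by
          show B.IsValid (B.endpt (B.tau (B.act (j : ℤ) (base B e r)))
            (gSteps (n * B.d (B.tau (B.act (j : ℤ) (base B e r)))))) [Step.tau]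
          rw [endpt_gSteps B hB]
          refine ⟨fun _ => ⟨mem_U_act hB hτjU n, ?_⟩, trivial⟩
          rw [tau_act_dmul hB n _ hτjU, hττ]
          exact mem_U_act hB hjU n
        have part1 := Htp.post [Step.tau] hc hvld
        have part2 : Htp B (B.act (j : ℤ) (base B e r))
            ((gSteps (n * B.d (B.act (j : ℤ) (base B e r))) ++ [Step.tau]) ++ [Step.tau])
            (gSteps (n * B.d (B.act (j : ℤ) (base B e r)))) := by
          have htt := Htp.tautau (B := B)
            (B.act (n * B.d (B.act (j : ℤ) (base B e r))) (B.act (j : ℤ) (base B e r)))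
            (mem_U_act hB hjU n)
          have := Htp.pre (B := B) (B.act (j : ℤ) (base B e r))
            (gSteps (n * B.d (B.act (j : ℤ) (base B e r))))
            (noTau_isValid B (noTau_gSteps _) _)
            (by rw [endpt_gSteps B hB]; exact htt)
          simpa using this
        have inner := part1.trans part2
        have inner' : Htp B (B.endpt e (walkOf B r ++ List.replicate j Step.g))
            ((Step.tau :: gSteps (n * B.d (B.tau (B.act (j : ℤ) (base B e r)))))
              ++ [Step.tau])
            (gSteps (n * B.d (B.act (j : ℤ) (base B e r)))) := by
          rw [hend]
          exact inner
        have h2 := Htp.pre e (walkOf B r ++ List.replicate j Step.g) hv inner'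
        have hdu : B.d (B.act (j : ℤ) (base B e r)) = B.d (base B e r) := hB.d_act _ _
        rw [hdu] at h2
        rw [show stWalk B e (0, j :: r, n) ++ [Step.tau]
            = (walkOf B r ++ List.replicate j Step.g)
              ++ ((Step.tau :: gSteps (n * B.d (B.tau (B.act (j : ℤ) (base B e r)))))
                ++ [Step.tau]) from by simp [stWalk, walkOf, base]]
        rw [show stWalk B e (j, r, n) = (walkOf B r ++ List.replicate j Step.g)
            ++ gSteps (n * B.d (base B e r)) from by simp [stWalk, base]]
        exact h2
    · -- push
      rw [show stepSt B e Step.tau (i, rest, n) = (0, i :: rest, n) from by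
        simp only [stepSt]; rw [if_neg h]]
      have hv : B.IsValid e (walkOf B rest ++ List.replicate i Step.g) := by
        rw [B.isValid_append]
        exact ⟨hvW, noTau_isValid B (noTau_replicate_g _) _⟩
      have hend : B.endpt e (walkOf B rest ++ List.replicate i Step.g)
          = B.act (i : ℤ) (base B e rest) := by
        rw [B.endpt_append, hendW, endpt_replicate_g B hB]
      have inner := htp_commute hB n (B.act (i : ℤ) (base B e rest)) ht0
      have inner' : Htp B (B.endpt e (walkOf B rest ++ List.replicate i Step.g))
          (gSteps (n * B.d (B.act (i : ℤ) (base B e rest))) ++ [Step.tau])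
          (Step.tau :: gSteps (n * B.d (B.tau (B.act (i : ℤ) (base B e rest))))) := by
        rw [hend]
        exact inner
      have h2 := Htp.pre e (walkOf B rest ++ List.replicate i Step.g) hv inner'
      have hdt0 : B.d (B.act (i : ℤ) (base B e rest)) = B.d (base B e rest) :=
        hB.d_act _ _
      rw [hdt0] at h2
      rw [show stWalk B e (i, rest, n) ++ [Step.tau]
          = (walkOf B rest ++ List.replicate i Step.g)
            ++ (gSteps (n * B.d (base B e rest)) ++ [Step.tau]) from by simp [stWalk]]
      rw [show stWalk B e (0, i :: rest, n) = (walkOf B rest ++ List.replicate i Step.g)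
          ++ (Step.tau :: gSteps (n * B.d (B.tau (B.act (i : ℤ) (base B e rest)))))
          from by simp [stWalk, walkOf, base]]
      exact h2

theorem htp_toWalk (B : BrauerData) (e : B.E) (hB : B.IsBrauer) (l : List Step) :
    ∀ (s : St) (x : B.E), StV B e s → actual B e s = x → B.IsValid x l →
      Htp B e (stWalk B e s ++ l) (stWalk B e (foldSt B e s l)) := by
  induction l with
  | nil =>
    rintro ⟨i, rest, n⟩ x hs hx _
    rw [List.append_nil]
    exact Htp.refl e _ (stWalk_valid B e hB hs).1
  | cons st t ih =>
    rintro ⟨i, rest, n⟩ x hs hx hv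
    have hone := foldSt_track B e hB [st] (i, rest, n) x hs hx ⟨hv.1, trivial⟩
    have h1 := htp_step B e hB st i rest n hs hx hv.1
    have h3 : Htp B e ((stWalk B e (i, rest, n) ++ [st]) ++ t)
        (stWalk B e (stepSt B e st (i, rest, n)) ++ t) := by
      refine Htp.post t h1 ?_
      rw [B.endpt_append, (stWalk_valid B e hB hs).2, hx]
      exact hv.2
    have h2 := ih (stepSt B e st (i, rest, n)) (B.stepFun st x) hone.1 hone.2 hv.2
    have := h3.trans h2
    simpa [foldSt] using this

theorem base_nil (B : BrauerData) (e : B.E) : base B e [] = e := rfl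

end Aux

/-- unique factorization of walks.
Every walk `w` of a Brauer `G`-set is homotopic to `(t(w)|g^(n·d(t(w)))|t(v)) v`
for a unique special walk `v` (with the same source) and a unique integer `n`. -/
theorem unique_special_factorization (B : BrauerData) (hB : B.IsBrauer)
    (e : B.E) (l : List Step) (hl : B.IsValid e l) :
    ∃! p : List Step × ℤ,
      IsSpecial B e p.1 ∧
      Htp B e l (p.1 ++ gSteps (p.2 * (B.d (B.endpt e l) : ℤ))) := by
  have hs0 : StV B e ((0, [], 0) : St) := ⟨trivial, hB.dpos _⟩
  have hx0 : actual B e ((0, [], 0) : St) = e := by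
    show B.act (((0 : ℕ) : ℤ) + 0 * B.d (base B e [])) (base B e []) = e
    rw [base_nil]
    norm_num [hB.act_zero]
  rcases hdef : foldSt B e (0, [], 0) l with ⟨i, rest, n⟩
  have htrack := foldSt_track B e hB l (0, [], 0) e hs0 hx0 hl
  rw [hdef] at htrack
  obtain ⟨hsV, hact⟩ := htrack
  have hmain := htp_toWalk B e hB l (0, [], 0) e hs0 hx0 hl
  have hnil : stWalk B e ((0, [], 0) : St) = [] := by
    simp [stWalk, walkOf, base, gSteps_zero]
  rw [hnil, List.nil_append, hdef] at hmain
  have hd : B.d (B.endpt e l) = B.d (base B e rest) := by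
    rw [← hact]
    show B.d (B.act ((i : ℤ) + n * B.d (base B e rest)) (base B e rest)) = _
    exact hB.d_act _ _
  have hhtp : Htp B e l ((walkOf B rest ++ List.replicate i Step.g)
      ++ gSteps (n * (B.d (B.endpt e l) : ℤ))) := by
    rw [hd]
    rw [show (walkOf B rest ++ List.replicate i Step.g)
        ++ gSteps (n * (B.d (base B e rest) : ℤ)) = stWalk B e (i, rest, n) from by
      simp [stWalk]]
    exact hmain
  refine ⟨(walkOf B rest ++ List.replicate i Step.g, n),
    ⟨state_special B e hB hsV, hhtp⟩, ?_⟩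
  rintro ⟨v', n'⟩ ⟨hsp', hhtp'⟩
  dsimp only at hsp' hhtp'
  have hvalid' := htp_valid_end hB hhtp'
  have hIv' : B.IsValid e v' := ((B.isValid_append e v' _).mp hvalid'.2.1).1
  obtain ⟨i₁, rest₁, hfold₁, hrec⟩ := foldSt_special B e hB hsp'
  have htrack' := foldSt_track B e hB v' (0, [], 0) e hs0 hx0 hIv'
  rw [hfold₁] at htrack'
  have hi₁ : i₁ < B.d (base B e rest₁) := htrack'.1.2
  have hd₁ : B.d (B.endpt e l) = B.d (base B e rest₁) := by
    have h1 : B.endpt e l = B.endpt e (v' ++ gSteps (n' * (B.d (B.endpt e l) : ℤ))) :=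
      hvalid'.2.2
    rw [h1, B.endpt_append, endpt_gSteps B hB, hB.d_act, ← htrack'.2]
    show B.d (B.act ((i₁ : ℤ) + 0 * B.d (base B e rest₁)) (base B e rest₁)) = _
    exact hB.d_act _ _
  have hinv := htp_foldSt B e hB hhtp' (0, [], 0) hs0 hx0
  rw [foldSt_append, hfold₁, hd₁, foldSt_gSteps_mulD B e n' i₁ rest₁ 0 hi₁, hdef]
    at hinv
  simp only [Prod.mk.injEq] at hinv
  obtain ⟨h_i, h_rest, h_n⟩ := hinv
  simp only [Prod.mk.injEq]
  constructor
  · rw [← hrec, h_i, h_rest]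
  · omega

end FB
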